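/- arXiv:2104.03193 — 4 statements merged into one kernel-verified Lean document; each statement's English description precedes it below -/
import Mathlib

section
/- The set of n×n symmetric positive definite matrices equipped with the operation P ⊙ Q = exp(log P + log Q) forms an Abelian group, with identity the n×n identity matrix and inverse of P given by the usual matrix inverse P⁻¹. -/
open Matrix

/-!
`mlog` is a bijection from the SPD matrices onto the additive group of symmetric matrices, with
inverse `exp`, so `exp (mlog P + mlog Q)` is matrix addition transported along it and every group
law is inherited from addition. The identity and inverses match because `exp 0 = 1` and
`exp (-S) = (exp S)⁻¹` give `mlog 1 = 0` and `mlog P⁻¹ = -mlog P`.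
-/

section LogEuclidean

variable {ι : Type*} [Fintype ι] [DecidableEq ι] {mlog : Matrix ι ι ℝ → Matrix ι ι ℝ}

theorem mlog_one (hlog_exp : ∀ S : Matrix ι ι ℝ, S.IsSymm → mlog (NormedSpace.exp S) = S) :
    mlog 1 = 0 := by
  simpa only [NormedSpace.exp_zero] using hlog_exp 0 isSymm_zero

theorem mlog_inv (hexp_log : ∀ P : Matrix ι ι ℝ, P.PosDef → NormedSpace.exp (mlog P) = P)
    (hlog_exp : ∀ S : Matrix ι ι ℝ, S.IsSymm → mlog (NormedSpace.exp S) = S)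
    (hlog_symm : ∀ P : Matrix ι ι ℝ, P.PosDef → (mlog P).IsSymm)
    {P : Matrix ι ι ℝ} (hP : P.PosDef) : mlog P⁻¹ = -mlog P := by
  rw [← hlog_exp _ (hlog_symm P hP).neg, Matrix.exp_neg, hexp_log P hP]

theorem mlog_exp_add (hlog_exp : ∀ S : Matrix ι ι ℝ, S.IsSymm → mlog (NormedSpace.exp S) = S)
    (hlog_symm : ∀ P : Matrix ι ι ℝ, P.PosDef → (mlog P).IsSymm)
    {P Q : Matrix ι ι ℝ} (hP : P.PosDef) (hQ : Q.PosDef) :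
    mlog (NormedSpace.exp (mlog P + mlog Q)) = mlog P + mlog Q :=
  hlog_exp _ ((hlog_symm P hP).add (hlog_symm Q hQ))

end LogEuclidean

/-- The set of n×n symmetric positive definite matrices with P ⊙ Q = exp(log P + log Q)
forms an Abelian group, with identity the identity matrix and inverse the matrix inverse.
Here `mlog` is the principal matrix logarithm, characterized as the inverse of the
matrix exponential between symmetric matrices and symmetric positive definite matrices. -/
theorem spd_logEuclidean_abelian_group (n : ℕ)
    (mlog : Matrix (Fin n) (Fin n) ℝ → Matrix (Fin n) (Fin n) ℝ)
    (hexp_log : ∀ P : Matrix (Fin n) (Fin n) ℝ, P.PosDef → NormedSpace.exp (mlog P) = P)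
    (hlog_exp : ∀ S : Matrix (Fin n) (Fin n) ℝ, S.IsSymm → mlog (NormedSpace.exp S) = S)
    (hlog_symm : ∀ P : Matrix (Fin n) (Fin n) ℝ, P.PosDef → (mlog P).IsSymm)
    (hexp_pd : ∀ S : Matrix (Fin n) (Fin n) ℝ, S.IsSymm → (NormedSpace.exp S).PosDef) :
    ∀ op : Matrix (Fin n) (Fin n) ℝ → Matrix (Fin n) (Fin n) ℝ → Matrix (Fin n) (Fin n) ℝ,
      (op = fun P Q => NormedSpace.exp (mlog P + mlog Q)) →
      (∀ P Q, P.PosDef → Q.PosDef → (op P Q).PosDef) ∧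
      (∀ P Q R, P.PosDef → Q.PosDef → R.PosDef → op (op P Q) R = op P (op Q R)) ∧
      (∀ P Q, P.PosDef → Q.PosDef → op P Q = op Q P) ∧
      (∀ P, P.PosDef → op P 1 = P ∧ op 1 P = P) ∧
      (∀ P, P.PosDef → op P P⁻¹ = 1 ∧ op P⁻¹ P = 1) := by
  rintro op rfl
  refine ⟨fun P Q hP hQ => hexp_pd _ ((hlog_symm P hP).add (hlog_symm Q hQ)), ?assoc, ?comm,
    ?one, ?inv⟩
  case assoc =>
    intro P Q R hP hQ hR
    simp only [mlog_exp_add hlog_exp hlog_symm hP hQ, mlog_exp_add hlog_exp hlog_symm hQ hR,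
      add_assoc]
  case comm => exact fun P Q _ _ => by simp only [add_comm]
  case one =>
    intro P hP
    simp only [mlog_one hlog_exp, add_zero, zero_add, hexp_log P hP, and_self]
  case inv =>
    intro P hP
    simp only [mlog_inv hexp_log hlog_exp hlog_symm hP, add_neg_cancel, neg_add_cancel,
      NormedSpace.exp_zero, and_self]
end

section
/- The operations ⊙ and ∗ make SP(n) a real vector space: with P ⊙ Q = exp(log P + log Q) as addition and λ ∗ P = exp(λ log P) as scalar multiplication, all vector space axioms hold. -/
/-! `mlog` is a bijection from the positive definite matrices onto the symmetric
ones with inverse `exp`, and `⊙`, `∗` are the vector space operations of the symmetric matrices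
transported along it. Every axiom is therefore the corresponding identity for `+` and `•`
after applying `mlog (exp S) = S` to the symmetric matrices `mlog P + mlog Q` and `λ • mlog P`. -/

open Matrix

/-- With P ⊙ Q = exp(log P + log Q) as addition and λ ∗ P = exp(λ log P) as scalar
multiplication, the symmetric positive definite matrices satisfy all the real vector
space axioms (with the identity matrix as zero vector and matrix inverse as negation). -/
theorem spd_logEuclidean_vector_space (n : ℕ)
    (mlog : Matrix (Fin n) (Fin n) ℝ → Matrix (Fin n) (Fin n) ℝ)
    (hexp_log : ∀ P : Matrix (Fin n) (Fin n) ℝ, P.PosDef → NormedSpace.exp (mlog P) = P)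
    (hlog_exp : ∀ S : Matrix (Fin n) (Fin n) ℝ, S.IsSymm → mlog (NormedSpace.exp S) = S)
    (hlog_symm : ∀ P : Matrix (Fin n) (Fin n) ℝ, P.PosDef → (mlog P).IsSymm)
    (hexp_pd : ∀ S : Matrix (Fin n) (Fin n) ℝ, S.IsSymm → (NormedSpace.exp S).PosDef) :
    ∀ (op : Matrix (Fin n) (Fin n) ℝ → Matrix (Fin n) (Fin n) ℝ → Matrix (Fin n) (Fin n) ℝ)
      (sm : ℝ → Matrix (Fin n) (Fin n) ℝ → Matrix (Fin n) (Fin n) ℝ),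
      (op = fun P Q => NormedSpace.exp (mlog P + mlog Q)) →
      (sm = fun lam P => NormedSpace.exp (lam • mlog P)) →
      -- closure
      (∀ P Q, P.PosDef → Q.PosDef → (op P Q).PosDef) ∧
      (∀ (lam : ℝ) P, P.PosDef → (sm lam P).PosDef) ∧
      -- abelian group axioms for ⊙
      (∀ P Q R, P.PosDef → Q.PosDef → R.PosDef → op (op P Q) R = op P (op Q R)) ∧
      (∀ P Q, P.PosDef → Q.PosDef → op P Q = op Q P) ∧
      (∀ P, P.PosDef → op P 1 = P) ∧
      (∀ P, P.PosDef → op P P⁻¹ = 1) ∧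
      -- scalar multiplication axioms
      (∀ P, P.PosDef → sm 1 P = P) ∧
      (∀ (a b : ℝ) P, P.PosDef → sm (a * b) P = sm a (sm b P)) ∧
      (∀ (a : ℝ) P Q, P.PosDef → Q.PosDef → sm a (op P Q) = op (sm a P) (sm a Q)) ∧
      (∀ (a b : ℝ) P, P.PosDef → sm (a + b) P = op (sm a P) (sm b P)) ∧
      (∀ P, P.PosDef → sm 0 P = 1) := by
  rintro op sm rfl rfl
  have log_op : ∀ P Q, P.PosDef → Q.PosDef →
      mlog (NormedSpace.exp (mlog P + mlog Q)) = mlog P + mlog Q := fun P Q hP hQ =>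
    hlog_exp _ ((hlog_symm P hP).add (hlog_symm Q hQ))
  have log_sm : ∀ (a : ℝ) P, P.PosDef → mlog (NormedSpace.exp (a • mlog P)) = a • mlog P :=
    fun a P hP => hlog_exp _ ((hlog_symm P hP).smul a)
  refine ⟨fun P Q hP hQ => hexp_pd _ ((hlog_symm P hP).add (hlog_symm Q hQ)),
    fun a P hP => hexp_pd _ ((hlog_symm P hP).smul a), ?_, ?_, ?_, ?_, ?_, ?_, ?_, ?_, ?_⟩
  · intro P Q R hP hQ hR
    simp only [log_op P Q hP hQ, log_op Q R hQ hR, add_assoc]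
  · intro P Q _ _
    simp only [add_comm]
  · intro P hP
    simp only [mlog_one hlog_exp, add_zero, hexp_log P hP]
  · intro P hP
    simp only [mlog_inv hexp_log hlog_exp hlog_symm hP, add_neg_cancel, NormedSpace.exp_zero]
  · intro P hP
    simp only [one_smul, hexp_log P hP]
  · intro a b P hP
    simp only [log_sm b P hP, smul_smul]
  · intro a P Q hP hQ
    simp only [log_op P Q hP hQ, log_sm a P hP, log_sm a Q hQ, smul_add]
  · intro a b P hP
    simp only [log_sm a P hP, log_sm b P hP, add_smul]
  · intro P _
    simp only [zero_smul, NormedSpace.exp_zero]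
end

section
/- For symmetric positive definite matrices P and Q and t ∈ [0,1], the determinant of the point exp((1−t) log P + t log Q) on the Log-Euclidean geodesic equals det(P)^{1−t} · det(Q)^t; in particular there is no swelling effect: det of any point on the geodesic is at most max(det P, det Q) raised to appropriate interpolation, i.e. log det interpolates linearly. -/
open Matrix

/-! Diagonalising a symmetric matrix by an orthogonal one gives det (exp S) = exp (tr S). Since the
trace is linear, log det is affine along the geodesic; exponentiating gives the product of powers. -/

theorem Matrix.IsSymm.det_exp {m : Type*} [Fintype m] [DecidableEq m] {S : Matrix m m ℝ}
    (hS : S.IsSymm) : (NormedSpace.exp S).det = Real.exp S.trace := by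
  have hH : S.IsHermitian := by rwa [IsHermitian, conjTranspose_eq_transpose_of_trivial]
  set U := hH.eigenvectorUnitary
  have hU_inv : (U : Matrix m m ℝ)⁻¹ = star (U : Matrix m m ℝ) :=
    inv_eq_left_inv (mem_unitaryGroup_iff'.mp U.2)
  have hU_unit : IsUnit (U : Matrix m m ℝ) := ⟨Unitary.toUnits U, rfl⟩
  rw [hH.spectral_theorem, Unitary.conjStarAlgAut_apply, ← hU_inv, exp_conj _ _ hU_unit,
    exp_diagonal, det_conj hU_unit, det_diagonal, trace_conj hU_unit, trace_diagonal, Real.exp_sum]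
  simp [← Real.exp_eq_exp_ℝ]

theorem Matrix.IsSymm.log_det_exp {m : Type*} [Fintype m] [DecidableEq m] {S : Matrix m m ℝ}
    (hS : S.IsSymm) : Real.log (NormedSpace.exp S).det = S.trace := by
  rw [hS.det_exp, Real.log_exp]

theorem logEuclidean_geodesic_det_general (n : ℕ)
    (mlog : Matrix (Fin n) (Fin n) ℝ → Matrix (Fin n) (Fin n) ℝ)
    (hexp_log : ∀ P : Matrix (Fin n) (Fin n) ℝ, P.PosDef → NormedSpace.exp (mlog P) = P)
    (hlog_symm : ∀ P : Matrix (Fin n) (Fin n) ℝ, P.PosDef → (mlog P).IsSymm)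
    (P Q : Matrix (Fin n) (Fin n) ℝ) (hP : P.PosDef) (hQ : Q.PosDef)
    (t : ℝ) :
    (NormedSpace.exp ((1 - t) • mlog P + t • mlog Q)).det
      = P.det ^ (1 - t) * Q.det ^ t ∧
    Real.log (NormedSpace.exp ((1 - t) • mlog P + t • mlog Q)).det
      = (1 - t) * Real.log P.det + t * Real.log Q.det := by
  have hsymm : ((1 - t) • mlog P + t • mlog Q).IsSymm :=
    ((hlog_symm P hP).smul _).add ((hlog_symm Q hQ).smul _)
  have hlog_det_posDef : ∀ R, R.PosDef → Real.log R.det = (mlog R).trace := fun R hR => by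
    conv_lhs => rw [← hexp_log R hR]
    exact (hlog_symm R hR).log_det_exp
  have hlog_det : Real.log (NormedSpace.exp ((1 - t) • mlog P + t • mlog Q)).det
      = (1 - t) * Real.log P.det + t * Real.log Q.det := by
    rw [hsymm.log_det_exp, hlog_det_posDef P hP, hlog_det_posDef Q hQ, trace_add, trace_smul,
      trace_smul, smul_eq_mul, smul_eq_mul]
  have hdet_pos : 0 < (NormedSpace.exp ((1 - t) • mlog P + t • mlog Q)).det :=
    hsymm.det_exp ▸ Real.exp_pos _
  refine ⟨?_, hlog_det⟩
  rw [← Real.exp_log hdet_pos, hlog_det, Real.exp_add, Real.rpow_def_of_pos hP.det_pos,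
    Real.rpow_def_of_pos hQ.det_pos, mul_comm (1 - t), mul_comm t]

/-- Along the Log-Euclidean geodesic γ(t) = exp((1−t) log P + t log Q) between symmetric
positive definite matrices, det γ(t) = (det P)^{1−t} (det Q)^t; in particular log det
interpolates linearly (no swelling effect). -/
theorem logEuclidean_geodesic_det (n : ℕ)
    (mlog : Matrix (Fin n) (Fin n) ℝ → Matrix (Fin n) (Fin n) ℝ)
    (hexp_log : ∀ P : Matrix (Fin n) (Fin n) ℝ, P.PosDef → NormedSpace.exp (mlog P) = P)
    (hlog_exp : ∀ S : Matrix (Fin n) (Fin n) ℝ, S.IsSymm → mlog (NormedSpace.exp S) = S)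
    (hlog_symm : ∀ P : Matrix (Fin n) (Fin n) ℝ, P.PosDef → (mlog P).IsSymm)
    (P Q : Matrix (Fin n) (Fin n) ℝ) (hP : P.PosDef) (hQ : Q.PosDef)
    (t : ℝ) (ht : t ∈ Set.Icc (0 : ℝ) 1) :
    (NormedSpace.exp ((1 - t) • mlog P + t • mlog Q)).det
      = P.det ^ (1 - t) * Q.det ^ t ∧
    Real.log (NormedSpace.exp ((1 - t) • mlog P + t • mlog Q)).det
      = (1 - t) * Real.log P.det + t * Real.log Q.det :=
  logEuclidean_geodesic_det_general n mlog hexp_log hlog_symm P Q hP hQ t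
end

section
/- For symmetric positive definite matrices P and Q with t ∈ [0,1], the determinant of the point on the Affine-Invariant geodesic γ(t) = P^{1/2} exp(t log(P^{−1/2} Q P^{−1/2})) P^{1/2} equals det(P)^{1−t} · det(Q)^t, and hence coincides with the determinant of the corresponding point on the Log-Euclidean geodesic. -/
open Matrix
open scoped Classical

open scoped MatrixOrder in
/-- The symmetric positive definite square root of a positive definite matrix
(junk value `1` otherwise). -/
noncomputable def msqrt {n : ℕ} (P : Matrix (Fin n) (Fin n) ℝ) : Matrix (Fin n) (Fin n) ℝ :=
  if h : P.PosDef then CFC.sqrt P else 1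

/-!
Since `det (exp S) = exp (tr S)` for symmetric `S`, the map `S ↦ det (exp S)` turns the linear
structure of symmetric matrices into the multiplicative structure of positive reals. Hence
`det γ(t) = det P · det (P^{-1/2} Q P^{-1/2})^t = det P · (det Q / det P)^t`, and the
Log-Euclidean point has determinant `exp ((1 - t) tr log P + t tr log Q)`, the same number.
-/

theorem Real.mul_div_rpow_eq {p q : ℝ} (hp : 0 < p) (hq : 0 ≤ q) (t : ℝ) :
    p * (q / p) ^ t = p ^ (1 - t) * q ^ t := by
  rw [Real.div_rpow hq hp.le, Real.rpow_sub hp, Real.rpow_one]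
  ring

namespace Matrix

variable {ι : Type*} [Fintype ι] [DecidableEq ι]

theorem det_inv_mul_mul_inv {K : Type*} [Field K] (B Q : Matrix ι ι K) :
    (B⁻¹ * Q * B⁻¹).det = Q.det / B.det ^ 2 := by
  rw [det_mul, det_mul, det_nonsing_inv, Ring.inverse_eq_inv']
  ring

open scoped ComplexOrder in
theorem PosDef.inv_mul_mul_inv {𝕜 : Type*} [RCLike 𝕜] {B Q : Matrix ι ι 𝕜}
    (hQ : Q.PosDef) (hB : B.PosDef) : (B⁻¹ * Q * B⁻¹).PosDef := by
  simpa [hB.inv.isHermitian.eq] using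
    hQ.conjTranspose_mul_mul_same (mulVec_injective_iff_isUnit.mpr hB.inv.isUnit)

theorem IsHermitian.det_cfc {𝕜 : Type*} [RCLike 𝕜] {A : Matrix ι ι 𝕜}
    (hA : A.IsHermitian) (f : ℝ → ℝ) :
    (cfc f A).det = ∏ i, (f (hA.eigenvalues i) : 𝕜) := by
  simp [hA.cfc_eq, IsHermitian.cfc, -Unitary.conjStarAlgAut_apply]

-- The C⋆-norm is only needed to invoke the CFC lemma; `exp` itself depends only on the topology.
open scoped Matrix.Norms.L2Operator in
theorem IsHermitian.exp_eq_cfc {A : Matrix ι ι ℝ} (hA : A.IsHermitian) :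
    NormedSpace.exp A = cfc Real.exp A :=
  (CFC.real_exp_eq_normedSpace_exp hA.isSelfAdjoint).symm

theorem IsHermitian.det_exp {A : Matrix ι ι ℝ} (hA : A.IsHermitian) :
    (NormedSpace.exp A).det = Real.exp A.trace := by
  rw [hA.exp_eq_cfc, hA.det_cfc, hA.trace_eq_sum_eigenvalues, Real.exp_sum]
  rfl

theorem IsHermitian.det_exp_smul {A : Matrix ι ι ℝ} (hA : A.IsHermitian) (s : ℝ) :
    (NormedSpace.exp (s • A)).det = (NormedSpace.exp A).det ^ s := by
  rw [(hA.smul (.all s)).det_exp, hA.det_exp, trace_smul, smul_eq_mul, mul_comm, Real.exp_mul]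

theorem IsHermitian.det_exp_smul_add_smul {A B : Matrix ι ι ℝ} (hA : A.IsHermitian)
    (hB : B.IsHermitian) (a b : ℝ) :
    (NormedSpace.exp (a • A + b • B)).det
      = (NormedSpace.exp A).det ^ a * (NormedSpace.exp B).det ^ b := by
  rw [((hA.smul (.all a)).add (hB.smul (.all b))).det_exp, trace_add, Real.exp_add,
    ← (hA.smul (.all a)).det_exp, ← (hB.smul (.all b)).det_exp, hA.det_exp_smul, hB.det_exp_smul]

end Matrix

section

open scoped MatrixOrder

theorem msqrt_posDef {n : ℕ} {P : Matrix (Fin n) (Fin n) ℝ} (hP : P.PosDef) :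
    (msqrt P).PosDef := by
  rw [msqrt, dif_pos hP]
  exact (IsStrictlyPositive.sqrt P hP.isStrictlyPositive).posDef

theorem msqrt_mul_self {n : ℕ} {P : Matrix (Fin n) (Fin n) ℝ} (hP : P.PosDef) :
    msqrt P * msqrt P = P := by
  rw [msqrt, dif_pos hP]
  exact CFC.sqrt_mul_sqrt_self P hP.posSemidef.nonneg

end

theorem affineInvariant_geodesic_det_general (n : ℕ)
    (mlog : Matrix (Fin n) (Fin n) ℝ → Matrix (Fin n) (Fin n) ℝ)
    (hexp_log : ∀ P : Matrix (Fin n) (Fin n) ℝ, P.PosDef → NormedSpace.exp (mlog P) = P)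
    (hlog_symm : ∀ P : Matrix (Fin n) (Fin n) ℝ, P.PosDef → (mlog P).IsSymm)
    (P Q : Matrix (Fin n) (Fin n) ℝ) (hP : P.PosDef) (hQ : Q.PosDef)
    (t : ℝ) :
    (msqrt P * NormedSpace.exp (t • mlog ((msqrt P)⁻¹ * Q * (msqrt P)⁻¹)) * msqrt P).det
      = P.det ^ (1 - t) * Q.det ^ t ∧
    (msqrt P * NormedSpace.exp (t • mlog ((msqrt P)⁻¹ * Q * (msqrt P)⁻¹)) * msqrt P).det
      = (NormedSpace.exp ((1 - t) • mlog P + t • mlog Q)).det := by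
  have hlog : ∀ R : Matrix (Fin n) (Fin n) ℝ, R.PosDef → (mlog R).IsHermitian := fun R hR =>
    (conjTranspose_eq_transpose_of_trivial _).trans (hlog_symm R hR)
  have hA := hQ.inv_mul_mul_inv (msqrt_posDef hP)
  have hdetP : (msqrt P).det ^ 2 = P.det := by rw [sq, ← det_mul, msqrt_mul_self hP]
  have hgeo : (msqrt P * NormedSpace.exp (t • mlog ((msqrt P)⁻¹ * Q * (msqrt P)⁻¹))
      * msqrt P).det = P.det ^ (1 - t) * Q.det ^ t := by
    rw [det_mul, det_mul, (hlog _ hA).det_exp_smul, hexp_log _ hA, det_inv_mul_mul_inv, hdetP,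
      ← Real.mul_div_rpow_eq hP.det_pos hQ.det_pos.le, ← hdetP]
    ring
  refine ⟨hgeo, ?_⟩
  rw [hgeo, (hlog P hP).det_exp_smul_add_smul (hlog Q hQ), hexp_log P hP, hexp_log Q hQ]

/-- Along the Affine-Invariant geodesic
γ(t) = P^{1/2} exp(t log(P^{−1/2} Q P^{−1/2})) P^{1/2},
det γ(t) = (det P)^{1−t} (det Q)^t, which coincides with the determinant of the
corresponding point exp((1−t) log P + t log Q) on the Log-Euclidean geodesic. -/
theorem affineInvariant_geodesic_det (n : ℕ)
    (mlog : Matrix (Fin n) (Fin n) ℝ → Matrix (Fin n) (Fin n) ℝ)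
    (hexp_log : ∀ P : Matrix (Fin n) (Fin n) ℝ, P.PosDef → NormedSpace.exp (mlog P) = P)
    (hlog_exp : ∀ S : Matrix (Fin n) (Fin n) ℝ, S.IsSymm → mlog (NormedSpace.exp S) = S)
    (hlog_symm : ∀ P : Matrix (Fin n) (Fin n) ℝ, P.PosDef → (mlog P).IsSymm)
    (P Q : Matrix (Fin n) (Fin n) ℝ) (hP : P.PosDef) (hQ : Q.PosDef)
    (t : ℝ) (ht : t ∈ Set.Icc (0 : ℝ) 1) :
    (msqrt P * NormedSpace.exp (t • mlog ((msqrt P)⁻¹ * Q * (msqrt P)⁻¹)) * msqrt P).det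
      = P.det ^ (1 - t) * Q.det ^ t ∧
    (msqrt P * NormedSpace.exp (t • mlog ((msqrt P)⁻¹ * Q * (msqrt P)⁻¹)) * msqrt P).det
      = (NormedSpace.exp ((1 - t) • mlog P + t • mlog Q)).det :=
  affineInvariant_geodesic_det_general n mlog hexp_log hlog_symm P Q hP hQ t
end
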